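/- Let G = (Ξ, Σ, Δ) be a grammar in 2-normal form, b = w_1* … w_d* a bounded expression over Σ, and let G^b, G^∩ and ζ be as defined. For all X ∈ Ξ, q^{(r)}_s, q^{(u)}_v ∈ Ξ^b, w ∈ Σ*, k > 0 and γ ∈ (Δ^∩)*: if [q^{(r)}_s X q^{(u)}_v] ⇒^γ w is a k-index depth-first derivation of G^∩, then X ⇒^{ζ(γ)} w is a k-index depth-first derivation of G and q^{(r)}_s ⇒* w·q^{(u)}_v in G^b. -/

import Mathlib

namespace Paper

/-- A word over nonterminals `N` and terminals `T`. -/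
abbrev Word (N T : Type) := List (N ⊕ T)

/-- A production of a grammar. -/
abbrev CProd (N T : Type) := N × Word N T

/-- A grammar, given by its set of productions. -/
structure CFG (N T : Type) where
  prods : Set (CProd N T)

variable {N T : Type}

/-- number of occurrences of nonterminals in a word -/
def ntCount (u : Word N T) : ℕ := (u.filter (fun s => s.isLeft)).length

/-- number of occurrences of terminals in a word -/
def tCount (u : Word N T) : ℕ := (u.filter (fun s => s.isRight)).length

/-- the result of applying production `p` at position `j` of `u` -/
def applyProd (p : CProd N T) (j : ℕ) (u : Word N T) : Word N T :=
  u.take j ++ p.2 ++ u.drop (j + 1)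

/-- `KSeq G k u γjs v`: a step sequence from `u` to `v` applying the indicated
productions at the indicated positions, in which every word (including `u`, `v`)
has at most `k` occurrences of nonterminals (`k = ⊤` places no restriction). -/
inductive KSeq (G : CFG N T) (k : ℕ∞) : Word N T → List (CProd N T × ℕ) → Word N T → Prop
  | refl (u : Word N T) : (ntCount u : ℕ∞) ≤ k → KSeq G k u [] u
  | step {u v : Word N T} {p : CProd N T} {j : ℕ} {rest : List (CProd N T × ℕ)} :
      (ntCount u : ℕ∞) ≤ k → p ∈ G.prods → u[j]? = some (Sum.inl p.1) →
      KSeq G k (applyProd p j u) rest v → KSeq G k u ((p, j) :: rest) v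

/-- words annotated with the index of the step at which each symbol occurrence appeared -/
abbrev AWord (N T : Type) := List ((N ⊕ T) × ℕ)

def strip (u : AWord N T) : Word N T := u.map Prod.fst

def ntCountA (u : AWord N T) : ℕ := (u.filter (fun s => s.1.isLeft)).length

def applyProdA (p : CProd N T) (j m : ℕ) (u : AWord N T) : AWord N T :=
  u.take j ++ p.2.map (fun s => (s, m)) ++ u.drop (j + 1)

/-- the depth-first condition: position `j` carries a maximal first-appearance
index among the nonterminal occurrences of `u` -/
def dfOK (u : AWord N T) (j : ℕ) : Prop :=
  ∀ i x o, u[(i : ℕ)]? = some (Sum.inl x, o) → ∀ s oj, u[j]? = some (s, oj) → o ≤ oj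

/-- `DFSeq G k m u γjs v`: a `k`-index depth-first step sequence on annotated words,
where `m` is the index (in the whole sequence) of the current word `u`. -/
inductive DFSeq (G : CFG N T) (k : ℕ∞) : ℕ → AWord N T → List (CProd N T × ℕ) → AWord N T → Prop
  | refl (m : ℕ) (u : AWord N T) : (ntCountA u : ℕ∞) ≤ k → DFSeq G k m u [] u
  | step {m : ℕ} {u v : AWord N T} {p : CProd N T} {j o : ℕ} {rest : List (CProd N T × ℕ)} :
      (ntCountA u : ℕ∞) ≤ k → p ∈ G.prods → u[j]? = some (Sum.inl p.1, o) →
      dfOK u j →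
      DFSeq G k (m + 1) (applyProdA p j (m + 1) u) rest v →
      DFSeq G k m u ((p, j) :: rest) v

/-- `u ⇒^γ v` by a `k`-index step sequence (positions existentially quantified). -/
def CtrlSeq (G : CFG N T) (k : ℕ∞) (u : Word N T) (γ : List (CProd N T)) (v : Word N T) : Prop :=
  ∃ js : List ℕ, js.length = γ.length ∧ KSeq G k u (γ.zip js) v

/-- annotate a word as an initial word of a step sequence -/
def annot (u : Word N T) : AWord N T := u.map (fun s => (s, 0))

/-- `u ⇒^γ v` by a `k`-index depth-first step sequence starting at `u`. -/
def DFCtrlFrom (G : CFG N T) (k : ℕ∞) (u : Word N T) (γ : List (CProd N T)) (v : Word N T) :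
    Prop :=
  ∃ (js : List ℕ) (va : AWord N T),
    js.length = γ.length ∧ DFSeq G k 0 (annot u) (γ.zip js) va ∧ strip va = v

/-- embedding of terminal words -/
def tw (w : List T) : Word N T := w.map Sum.inr

/-- the sentential word `u Y v` where `u, v` are terminal and `Y` is an optional nonterminal -/
def sent (u : List T) (Y : Option N) (v : List T) : Word N T :=
  tw u ++ (Y.elim [] (fun y => [Sum.inl y])) ++ tw v

/-- `L^{(k)}_{X,Y}(G) = { u·v | X ⇒* u Y v by a k-index step sequence }`;
`Y = none` stands for `ε`. -/
def LKY (G : CFG N T) (k : ℕ∞) (X : N) (Y : Option N) : Set (List T) :=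
  {w | ∃ u v γ, w = u ++ v ∧ CtrlSeq G k [Sum.inl X] γ (sent u Y v)}

/-- `L_X(G)` -/
def Lang (G : CFG N T) (X : N) : Set (List T) := LKY G ⊤ X none

/-- `L^{(k)}_X(G)` -/
def LangK (G : CFG N T) (k : ℕ) (X : N) : Set (List T) := LKY G (k : ℕ∞) X none

/-- `Γ^{df(k)}_{X,Y}(G)`: control words of `k`-index depth-first step sequences `X ⇒^γ u Y v`. -/
def GammaDF (G : CFG N T) (k : ℕ) (X : N) (Y : Option N) : Set (List (CProd N T)) :=
  {γ | ∃ u v : List T, DFCtrlFrom G (k : ℕ∞) [Sum.inl X] γ (sent u Y v)}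

/-- `L̂_{X,Y}(Γ, G)` -/
def LHat (G : CFG N T) (Γ : Set (List (CProd N T))) (X : N) (Y : Option N) : Set (List T) :=
  {w | ∃ u v, w = u ++ v ∧ ∃ γ ∈ Γ, CtrlSeq G ⊤ [Sum.inl X] γ (sent u Y v)}

/-- the language of the bounded expression `w₁* ⋯ w_d*` -/
def BLang {α : Type} : List (List α) → Set (List α)
  | [] => {[]}
  | w :: ws => {u | ∃ (n : ℕ) (v : List α), v ∈ BLang ws ∧ u = (List.replicate n w).flatten ++ v}

/-- the words of a bounded expression must be nonempty -/
def IsBExpr {α : Type} (ws : List (List α)) : Prop := ∀ w ∈ ws, w ≠ []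

/-- the language of the letter-bounded expression `a₁* ⋯ a_d*` -/
def letterLang {α : Type} (as : List α) : Set (List α) := BLang (as.map (fun a => [a]))

/-- the language `a_i* ⋯ a_j*` (0-indexed segment of `as` from `i` to `j` inclusive) -/
def segLang {α : Type} (as : List α) (i j : ℕ) : Set (List α) :=
  letterLang ((as.drop i).take (j - i + 1))

end Paper

namespace Paper

variable {N T : Type}

/-- ranked words over the nonterminals -/
abbrev RW (N : Type) := List (N × ℕ)

/-- the set of rank values is downward closed (equivalently, of the form `{0, …, m}`
when nonempty) -/
def contiguousRanks (q : RW N) : Prop := ∀ p ∈ q, ∀ j ≤ p.2, ∃ x : N, (x, j) ∈ q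

/-- vertices of the graph `A^{df(k)}_G` -/
def IsVertex (k : ℕ) (q : RW N) : Prop :=
  q.length ≤ k ∧ contiguousRanks q ∧ List.Pairwise (· ≤ ·) (q.map Prod.snd)

/-- `w↓Ξ` : projection of a word to its nonterminals -/
def ntProj (w : Word N T) : List N := w.filterMap Sum.getLeft?

open Classical in
/-- the rank given to the nonterminals produced by a step rewriting a nonterminal
of maximal rank `i`, where `uv` is the rest of the ranked word -/
noncomputable def newRank (uv : RW N) (i : ℕ) : ℕ :=
  if uv = [] then 0 else if ∀ p ∈ uv, p.2 ≠ i then i else i + 1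

/-- the edge relation of the graph `A^{df(k)}_G` -/
def Edge (G : CFG N T) (k : ℕ) (q : RW N) (p : CProd N T) (q' : RW N) : Prop :=
  p ∈ G.prods ∧ IsVertex k q ∧ IsVertex k q' ∧
  ∃ (u v : RW N) (i : ℕ), q = u ++ [(p.1, i)] ++ v ∧ (∀ x ∈ q, x.2 ≤ i) ∧
    q' = u ++ v ++ (ntProj p.2).map (fun X => (X, newRank (u ++ v) i))

/-- paths in a labeled graph, recording the sequence of edge labels -/
inductive GPath {V E : Type} (edge : V → E → V → Prop) : V → List E → V → Prop
  | refl (v : V) : GPath edge v [] v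
  | step {v v' v'' : V} {e : E} {es : List E} :
      edge v e v' → GPath edge v' es v'' → GPath edge v (e :: es) v''

/-- paths recording the successive vertices as well -/
inductive VPath {V E : Type} (edge : V → E → V → Prop) : V → List (E × V) → Prop
  | refl (v : V) : VPath edge v []
  | step {v v' : V} {e : E} {rest : List (E × V)} :
      edge v e v' → VPath edge v' rest → VPath edge v ((e, v') :: rest)

/-- endpoint of a path starting at `q` -/
def pend {V E : Type} (q : V) (π : List (E × V)) : V := (π.map Prod.snd).getLastD q

/-- a path is acyclic iff it visits no vertex twice -/
def AcyclicFrom {V E : Type} (q : V) (π : List (E × V)) : Prop :=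
  (q :: π.map Prod.snd).Nodup

/-- `Decomp edge q pairs fin` asserts that the path obtained by concatenating, in order,
the segments of `pairs` (each an acyclic segment followed by a cycle) and `fin` is a valid
path from `q`, alternating acyclic segments `ς_j` and cycles `θ_j`. -/
def Decomp {V E : Type} (edge : V → E → V → Prop) :
    V → List (List (E × V) × List (E × V)) → List (E × V) → Prop
  | q, [], fin => VPath edge q fin ∧ AcyclicFrom q fin
  | q, (σ, θ) :: rest, fin =>
      VPath edge q σ ∧ AcyclicFrom q σ ∧
      VPath edge (pend q σ) θ ∧ pend (pend q σ) θ = pend q σ ∧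
      Decomp edge (pend q σ) rest fin

/-- `|γ|_a`: total number of occurrences of the terminal `a` in the right-hand
sides of the productions of the control word `γ` -/
def projCnt {A : Type} [DecidableEq A] (γ : List (CProd N A)) (a : A) : ℕ :=
  ((γ.map (fun p => p.2)).flatten.filterMap Sum.getRight?).count a

/-- `proj(γ) = a₁^{|γ|_{a₁}} ⋯ a_s^{|γ|_{a_s}}` -/
def projW {A : Type} [DecidableEq A] (as : List A) (γ : List (CProd N A)) : List A :=
  (as.map (fun a => List.replicate (projCnt γ a) a)).flatten

end Paper

namespace Paper

variable {N T : Type}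

/-- a grammar is in 2-normal form -/
def TwoNF (G : CFG N T) : Prop := ∀ p ∈ G.prods, p.2.length ≤ 2

/-- states of the automaton/grammar `G^b`: `(s, i)` encodes `q^{(s+1)}_{i+1}`,
i.e. position `i` (0-indexed) inside the block `s` (0-indexed) -/
abbrev QB : Type := ℕ × ℕ

/-- `ℓ_s`: length of the `s`-th word of the bounded expression -/
def lenB (ws : List (List T)) (s : ℕ) : ℕ := (ws.getD s []).length

/-- the `i`-th letter of the `s`-th word -/
def letterB (ws : List (List T)) (s i : ℕ) : Option T := (ws.getD s [])[i]?

/-- the productions of the grammar `G^b` generating the bounded expression `b` -/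
def DeltaB (ws : List (List T)) : Set (CProd QB T) :=
  {p | (∃ s i a, s < ws.length ∧ i + 1 < lenB ws s ∧ letterB ws s i = some a ∧
          p = ((s, i), [Sum.inr a, Sum.inl (s, i + 1)]))
     ∨ (∃ s s' a, s ≤ s' ∧ s' < ws.length ∧
          letterB ws s (lenB ws s - 1) = some a ∧
          p = ((s, lenB ws s - 1), [Sum.inr a, Sum.inl (s', 0)]))
     ∨ (∃ s, s < ws.length ∧ p = ((s, 0), ([] : Word QB T)))}

/-- the grammar `G^b` -/
def GB (ws : List (List T)) : CFG QB T := ⟨DeltaB ws⟩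

/-- nonterminals `[q X q']` of the product grammar `G^∩` -/
abbrev NI (N : Type) : Type := QB × N × QB

/-- `q ∈ Ξ^b` -/
def ValidQ (ws : List (List T)) (q : QB) : Prop :=
  q.1 < ws.length ∧ q.2 < lenB ws q.1

/-- `[q X q'] ∈ Ξ^∩`: both states valid and blocks in order -/
def ValidNI (ws : List (List T)) (n : NI N) : Prop :=
  ValidQ ws n.1 ∧ ValidQ ws n.2.2 ∧ n.1.1 ≤ n.2.2.1

/-- `q ⇒* w·q'` in `G^b` -/
def DerB (ws : List (List T)) (q : QB) (w : List T) (q' : QB) : Prop :=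
  ∃ γ, CtrlSeq (GB ws) ⊤ [Sum.inl q] γ (tw w ++ [Sum.inl q'])

/-- the productions `Δ^∩` of the product grammar `G^∩` -/
def DeltaI (G : CFG N T) (ws : List (List T)) : Set (CProd (NI N) T) :=
  {pp | ∃ (q q' : QB) (X : N), ValidNI ws (q, X, q') ∧
     ((∃ w : List T, (X, tw w) ∈ G.prods ∧ DerB ws q w q' ∧
         pp = ((q, X, q'), tw w)) ∨
      (∃ Y : N, (X, [Sum.inl Y]) ∈ G.prods ∧
         pp = ((q, X, q'), [Sum.inl ((q, Y, q') : NI N)])) ∨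
      (∃ (a : T) (Y : N) (qm : QB), (X, [Sum.inr a, Sum.inl Y]) ∈ G.prods ∧
         ((q, [Sum.inr a, Sum.inl qm]) : CProd QB T) ∈ DeltaB ws ∧ ValidNI ws (qm, Y, q') ∧
         pp = ((q, X, q'), [Sum.inr a, Sum.inl ((qm, Y, q') : NI N)])) ∨
      (∃ (a : T) (Y : N) (qm : QB), (X, [Sum.inl Y, Sum.inr a]) ∈ G.prods ∧
         ((qm, [Sum.inr a, Sum.inl q']) : CProd QB T) ∈ DeltaB ws ∧ ValidNI ws (q, Y, qm) ∧
         pp = ((q, X, q'), [Sum.inl ((q, Y, qm) : NI N), Sum.inr a])) ∨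
      (∃ (Y Z : N) (qm : QB), (X, [Sum.inl Y, Sum.inl Z]) ∈ G.prods ∧
         ValidNI ws (q, Y, qm) ∧ ValidNI ws (qm, Z, q') ∧
         pp = ((q, X, q'), [Sum.inl ((q, Y, qm) : NI N), Sum.inl ((qm, Z, q') : NI N)])))}

/-- the product grammar `G^∩` -/
def GI (G : CFG N T) (ws : List (List T)) : CFG (NI N) T := ⟨DeltaI G ws⟩

/-- `ζ` on symbols -/
def zetaS : (NI N ⊕ T) → (N ⊕ T) := Sum.map (fun n => n.2.1) id

/-- `ζ` on productions -/
def zetaP (p : CProd (NI N) T) : CProd N T := (p.1.2.1, p.2.map zetaS)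

/-- `ζ` on control words -/
def zetaC (γ : List (CProd (NI N) T)) : List (CProd N T) := γ.map zetaP

/-- the intermediate state of the (unique, shortest) two-step run of `G^b` from the
left state of `h` to its right state; when the first step wraps, the least possible
intermediate block is chosen -/
noncomputable def iotaMid (ws : List (List T)) (h : NI N) (a b : T) : QB :=
  if h.1.2 + 1 < lenB ws h.1.1 then (h.1.1, h.1.2 + 1)
  else (sInf {y : ℕ | (((h.1.1, h.1.2), [Sum.inr a, Sum.inl ((y, 0) : QB)]) : CProd QB T) ∈ DeltaB ws ∧
                (((y, 0), [Sum.inr b, Sum.inl (h.2.2 : QB)]) : CProd QB T) ∈ DeltaB ws}, 0)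

/-- `ι` on right-hand sides: relabels terminals by the indices (0-indexed) of the
blocks of `b` completed by the corresponding moves of `G^b`; `h` is the head of the
production -/
noncomputable def iotaRhs (ws : List (List T)) (h : NI N) :
    Word (NI N) T → Word (NI N) ℕ
  | [] => []
  | [Sum.inr _] => if h.2.2.2 = 0 then [Sum.inr h.1.1] else []
  | [Sum.inr a, Sum.inr b] =>
      (if (iotaMid ws h a b).2 = 0 then [Sum.inr h.1.1] else []) ++
      (if h.2.2.2 = 0 then [Sum.inr (iotaMid ws h a b).1] else [])
  | [Sum.inr _, Sum.inl m] => (if m.1.2 = 0 then [Sum.inr h.1.1] else []) ++ [Sum.inl m]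
  | [Sum.inl m, Sum.inr _] => [Sum.inl m] ++ (if h.2.2.2 = 0 then [Sum.inr m.2.2.1] else [])
  | other => other.map (Sum.map id (fun _ => 0))

/-- the map `ι : Δ^∩ → Δ^⋈` -/
noncomputable def iota (ws : List (List T)) (p : CProd (NI N) T) : CProd (NI N) ℕ :=
  (p.1, iotaRhs ws p.1 p.2)

/-- the grammar `G^⋈`, whose terminals are the (0-indexed) letters `a₁, …, a_d`
represented by natural numbers -/
noncomputable def GBow (G : CFG N T) (ws : List (List T)) : CFG (NI N) ℕ :=
  ⟨iota ws '' DeltaI G ws⟩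

end Paper

namespace Paper

variable {N A : Type}

/-- `Ξ̂`: nonterminals producing some word starting with `a₁` and some word ending
with `a_d` -/
def XiHat (G : CFG N A) (a1 ad : A) : Set N :=
  {Y | (∃ w ∈ Lang G Y, ∃ v, w = a1 :: v) ∧ (∃ w ∈ Lang G Y, ∃ v, w = v ++ [ad])}

/-- the grammar `G^♯` (here `S = Ξ̂`, and `Ξ̌` is its complement) -/
def GSharp (G : CFG N A) (S : Set N) : CFG N A :=
  ⟨{p | p ∈ G.prods ∧ p.1 ∉ S} ∪
   {p | p ∈ G.prods ∧ p.1 ∈ S ∧ ∃ (u : Word N A) (Xr : N) (v : Word N A),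
      Xr ∈ S ∧ p.2 = u ++ [Sum.inl Xr] ++ v}⟩

/-- the grammar `G_{i,w}` for a pivot production `piv` (here `S = Ξ̂`) -/
def GPivot (G : CFG N A) (S : Set N) (piv : CProd N A) : CFG N A :=
  ⟨{p | p ∈ G.prods ∧ p.1 ∉ S} ∪ {piv}⟩

/-- `G` is reduced for `X` -/
def Reduced (G : CFG N A) (X : N) : Prop :=
  ∀ Y : N, Y ≠ X → (LKY G ⊤ X (some Y)).Nonempty ∧ (Lang G Y).Nonempty

/-- `a₁* ⋯ a_d*` (given by the list `as`) is the minimal strict letter-bounded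
expression for `L_X(G)` -/
def MinimalLB (G : CFG N A) (X : N) (as : List A) : Prop :=
  Lang G X ⊆ letterLang as ∧ ∀ i < as.length, ¬ (Lang G X ⊆ letterLang (as.eraseIdx i))

/-- a symbol of `A ∪ {ε}` as a word -/
def optT (a : Option A) : Word N A := a.elim [] (fun x => [Sum.inr x])

/-- a symbol of `Ξ ∪ {ε}` as a word -/
def optN (y : Option N) : Word N A := y.elim [] (fun x => [Sum.inl x])

/-- `y ⇒^γ u_y` is a (possibly empty) `k`-index depth-first derivation, where
`y ∈ Ξ ∪ {ε}`; for `y = ε` the derivation is empty -/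
def optDFDer (H : CFG N A) (k : ℕ) (y : Option N) (γ : List (CProd N A)) : Prop :=
  match y with
  | some Y => ∃ w : List A, DFCtrlFrom H (k : ℕ∞) [Sum.inl Y] γ (tw w)
  | none => γ = []

/-- the grammar `G_k` with productions `X_i → X_{i-1} X_{i-1}` (1 ≤ i ≤ k) and `X_0 → a` -/
def Gk (k : ℕ) : CFG ℕ Unit :=
  ⟨{p | (∃ i, 1 ≤ i ∧ i ≤ k ∧ p = (i, [Sum.inl (i - 1), Sum.inl (i - 1)])) ∨
        p = (0, [Sum.inr ()])}⟩

end Paper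

namespace Paper

/-! Stripping the annotations of `G^∩` maps its productions to productions of `G` and commutes
with rewriting, so a `k`-index depth-first sequence of `G^∩` is carried by `ζ` to one of `G`.
For the run of `G^b`, read a sentential form of `G^∩` from left to right as a path through the
states of `G^b`: a terminal is a move of `G^b`, a nonterminal `[p Y p']` jumps from `p` to `p'`.
The start word `[q X q']` is such a path from `q` to `q'`, every production of `G^∩` replaces a
jump by a path between the same states, so the final word `w` is read by a run from `q` to
`q'`. -/

variable {N T : Type}

section RightRun

variable {Q : Type}

inductive RightRun (H : CFG Q T) : Q → List T → Q → Prop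
  | nil (q : Q) : RightRun H q [] q
  | cons {q m q' : Q} {a : T} {w : List T} :
      (q, [Sum.inr a, Sum.inl m]) ∈ H.prods → RightRun H m w q' → RightRun H q (a :: w) q'

lemma exists_kseq_iff_exists_ctrlSeq {H : CFG Q T} {k : ℕ∞} {u v : Word Q T} :
    (∃ L, KSeq H k u L v) ↔ ∃ γ, CtrlSeq H k u γ v := by
  constructor
  · rintro ⟨L, hL⟩
    exact ⟨L.unzip.1, L.unzip.2, by simp, by rwa [List.zip_unzip]⟩
  · rintro ⟨γ, js, -, hL⟩
    exact ⟨_, hL⟩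

lemma getElem?_tw_ne_inl (u : List T) (j : ℕ) (x : Q) :
    (tw u : Word Q T)[j]? ≠ some (Sum.inl x) := by
  simp only [tw, List.getElem?_map]
  cases u[j]? <;> simp

lemma eq_of_getElem?_tw_append_singleton {u : List T} {q x : Q} {j : ℕ}
    (h : (tw u ++ [Sum.inl q] : Word Q T)[j]? = some (Sum.inl x)) :
    j = u.length ∧ x = q := by
  rcases lt_or_ge j u.length with hj | hj
  · rw [List.getElem?_append_left (by simpa [tw] using hj)] at h
    exact absurd h (getElem?_tw_ne_inl u j x)
  · rw [List.getElem?_append_right (by simpa [tw] using hj)] at h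
    simp only [tw, List.length_map, List.getElem?_singleton] at h
    split_ifs at h with h'
    · simp only [Option.some.injEq, Sum.inl.injEq] at h
      exact ⟨by omega, h.symm⟩

lemma applyProd_tw_append_singleton (p : CProd Q T) (u : List T) (s : Q ⊕ T) :
    applyProd p u.length (tw u ++ [s]) = tw u ++ p.2 := by
  simp [applyProd, tw]

lemma KSeq.eq_of_tw {H : CFG Q T} {k : ℕ∞} {u : List T} {L : List (CProd Q T × ℕ)}
    {v : Word Q T} (h : KSeq H k (tw u) L v) : v = tw u := by
  cases h with
  | refl => rfl
  | step _ _ hg _ => exact absurd hg (getElem?_tw_ne_inl _ _ _)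

lemma RightRun.exists_kseq {H : CFG Q T} {q q' : Q} {w : List T} (h : RightRun H q w q')
    (u : List T) : ∃ L, KSeq H ⊤ (tw u ++ [Sum.inl q]) L (tw (u ++ w) ++ [Sum.inl q']) := by
  induction h generalizing u with
  | nil q => exact ⟨[], by simpa using KSeq.refl _ le_top⟩
  | @cons q m q' a w hp _ ih =>
      obtain ⟨L, hL⟩ := ih (u ++ [a])
      refine ⟨(_, u.length) :: L, KSeq.step le_top hp (by simp [tw]) ?_⟩
      rw [applyProd_tw_append_singleton]
      simpa [tw] using hL

/-- An `ε`-step would leave a terminal word, which never reaches one ending in `q'`. -/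
lemma RightRun.of_kseq {H : CFG Q T}
    (hH : ∀ p ∈ H.prods, p.2 = [] ∨ ∃ a m, p.2 = [Sum.inr a, Sum.inl m])
    {k : ℕ∞} {x y : Word Q T} {L : List (CProd Q T × ℕ)} (h : KSeq H k x L y) :
    ∀ {u w : List T} {q q' : Q}, x = tw u ++ [Sum.inl q] → y = tw w ++ [Sum.inl q'] →
      ∃ w', w = u ++ w' ∧ RightRun H q w' q' := by
  induction h with
  | refl _ _ =>
      rintro u w q q' rfl hy
      obtain ⟨hu, hq⟩ := List.append_inj' hy rfl
      obtain rfl : u = w := List.map_injective_iff.mpr Sum.inr_injective hu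
      obtain rfl : q = q' := by simpa using hq
      exact ⟨[], by simp, RightRun.nil q⟩
  | @step _ _ p j _ _ hp hg hrest ih =>
      rintro u w q q' rfl rfl
      obtain ⟨rfl, hpq⟩ := eq_of_getElem?_tw_append_singleton hg
      rw [applyProd_tw_append_singleton] at hrest ih
      rcases hH p hp with hε | ⟨a, m, ham⟩
      · rw [hε, List.append_nil] at hrest
        have hlast := congrArg (·[w.length]?) hrest.eq_of_tw
        simp only [tw, List.getElem?_append_right, List.length_map, le_refl, Nat.sub_self,
          List.getElem?_cons_zero] at hlast
        exact absurd hlast.symm (getElem?_tw_ne_inl u w.length q')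
      · obtain ⟨w', hw, hrun⟩ := ih (u := u ++ [a]) (q := m) (by simp [ham, tw]) rfl
        obtain ⟨hp1, hp2⟩ := p
        subst hpq ham
        exact ⟨a :: w', by simpa using hw, RightRun.cons hp hrun⟩

end RightRun

lemma rhs_of_mem_deltaB {ws : List (List T)} {p : CProd QB T} (hp : p ∈ DeltaB ws) :
    p.2 = [] ∨ ∃ a m, p.2 = [Sum.inr a, Sum.inl m] := by
  rcases hp with ⟨_, _, a, -, -, -, rfl⟩ | ⟨_, _, a, -, -, -, rfl⟩ | ⟨_, -, rfl⟩
  · exact Or.inr ⟨a, _, rfl⟩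
  · exact Or.inr ⟨a, _, rfl⟩
  · exact Or.inl rfl

lemma derB_iff_rightRun {ws : List (List T)} {q q' : QB} {w : List T} :
    DerB ws q w q' ↔ RightRun (GB ws) q w q' := by
  rw [DerB, ← exists_kseq_iff_exists_ctrlSeq]
  constructor
  · rintro ⟨L, hL⟩
    obtain ⟨w', rfl, hrun⟩ := RightRun.of_kseq (fun _ => rhs_of_mem_deltaB) hL
      (u := []) (q := q) (by simp [tw]) rfl
    simpa using hrun
  · intro h
    simpa [tw] using h.exists_kseq []

section Spine

variable {ws : List (List T)}

inductive Spine (ws : List (List T)) : QB → Word (NI N) T → QB → Prop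
  | nil (q : QB) : Spine ws q [] q
  | consT {q m q' : QB} {a : T} {rest : Word (NI N) T} :
      (q, [Sum.inr a, Sum.inl m]) ∈ (GB ws).prods →
      Spine ws m rest q' → Spine ws q (Sum.inr a :: rest) q'
  | consN {q p' q' : QB} {Y : N} {rest : Word (NI N) T} :
      Spine ws p' rest q' → Spine ws q (Sum.inl ((q, Y, p') : NI N) :: rest) q'

lemma Spine.append {qa qm qb : QB} {u v : Word (NI N) T}
    (h₁ : Spine ws qa u qm) (h₂ : Spine ws qm v qb) : Spine ws qa (u ++ v) qb := by
  induction h₁ with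
  | nil => exact h₂
  | consT hd _ ih => exact Spine.consT hd (ih h₂)
  | consN _ ih => exact Spine.consN (ih h₂)

lemma Spine.exists_of_append {qa qb : QB} {u v : Word (NI N) T}
    (h : Spine ws qa (u ++ v) qb) : ∃ m, Spine ws qa u m ∧ Spine ws m v qb := by
  induction u generalizing qa with
  | nil => exact ⟨qa, Spine.nil qa, h⟩
  | cons s u ih =>
      cases h with
      | consT hd h' =>
          obtain ⟨m, hu, hv⟩ := ih h'
          exact ⟨m, Spine.consT hd hu, hv⟩
      | consN h' =>
          obtain ⟨m, hu, hv⟩ := ih h'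
          exact ⟨m, Spine.consN hu, hv⟩

lemma Spine.tw_append {qa qm qb : QB} {w : List T} {rest : Word (NI N) T}
    (h₁ : RightRun (GB ws) qa w qm) (h₂ : Spine ws qm rest qb) :
    Spine ws qa (tw w ++ rest) qb := by
  induction h₁ with
  | nil => exact h₂
  | cons hd _ ih => exact Spine.consT hd (ih h₂)

lemma Spine.rightRun_of_tw {q q' : QB} {w : List T} (h : Spine ws q (tw w : Word (NI N) T) q') :
    RightRun (GB ws) q w q' := by
  induction w generalizing q with
  | nil => cases h; exact RightRun.nil q'
  | cons a w ih =>
      cases h with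
      | consT hd h' => exact RightRun.cons hd (ih h')

lemma Spine.of_mem_deltaI {G : CFG N T} {m p' : QB} {Y : N} {rhs : Word (NI N) T}
    (hp : (((m, Y, p'), rhs) : CProd (NI N) T) ∈ DeltaI G ws) : Spine ws m rhs p' := by
  obtain ⟨_, _, _, -, hc⟩ := hp
  rcases hc with ⟨v, -, hder, he⟩ | ⟨Z, -, he⟩ | ⟨a, Z, qm, -, hd, -, he⟩ |
      ⟨a, Z, qm, -, hd, -, he⟩ | ⟨Z, Z', qm, -, -, -, he⟩ <;>
    obtain ⟨⟨rfl, rfl, rfl⟩, rfl⟩ := Prod.ext_iff.mp he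
  · simpa using Spine.tw_append (derB_iff_rightRun.mp hder) (Spine.nil (N := N) p')
  · exact Spine.consN (Spine.nil p')
  · exact Spine.consT hd (Spine.consN (Spine.nil p'))
  · exact Spine.consN (Spine.consT hd (Spine.nil p'))
  · exact Spine.consN (Spine.consN (Spine.nil p'))

lemma Spine.applyProd {G : CFG N T} {qa qb : QB} {u : Word (NI N) T} {j : ℕ}
    {p : CProd (NI N) T} (hs : Spine ws qa u qb) (hj : u[j]? = some (Sum.inl p.1))
    (hp : p ∈ DeltaI G ws) : Spine ws qa (applyProd p j u) qb := by
  obtain ⟨⟨m, Y, p'⟩, rhs⟩ := p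
  rw [← List.take_append_drop j u, List.drop_eq_getElem_cons (List.getElem?_eq_some_iff.mp hj).1,
    (List.getElem?_eq_some_iff.mp hj).2] at hs
  obtain ⟨_, hpre, hsuf⟩ := hs.exists_of_append
  cases hsuf with
  | consN hsuf => exact (hpre.append (Spine.of_mem_deltaI hp)).append hsuf

lemma strip_applyProdA (p : CProd N T) (j m : ℕ) (u : AWord N T) :
    strip (applyProdA p j m u) = applyProd p j (strip u) := by
  simp [strip, applyProdA, applyProd, List.map_take, List.map_drop, Function.comp_def]

lemma DFSeq.spine {G : CFG N T} {k : ℕ∞} {m : ℕ} {u va : AWord (NI N) T}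
    {L : List (CProd (NI N) T × ℕ)} (h : DFSeq (GI G ws) k m u L va) {qa qb : QB}
    (hs : Spine ws qa (strip u) qb) : Spine ws qa (strip va) qb := by
  induction h with
  | refl => exact hs
  | step _ hp hg _ _ ih =>
      apply ih
      rw [strip_applyProdA]
      exact hs.applyProd (by simp [strip, hg]) hp

end Spine

section Zeta

def zetaA : AWord (NI N) T → AWord N T := List.map (Prod.map zetaS id)

lemma strip_zetaA (u : AWord (NI N) T) : strip (zetaA u) = (strip u).map zetaS := by
  simp [strip, zetaA]

lemma ntCountA_zetaA (u : AWord (NI N) T) : ntCountA (zetaA u) = ntCountA u := by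
  induction u with
  | nil => rfl
  | cons s u ih =>
      obtain ⟨_ | _, _⟩ := s <;> simp_all [zetaA, ntCountA, zetaS, List.filter_cons]

lemma zetaA_applyProdA (p : CProd (NI N) T) (j m : ℕ) (u : AWord (NI N) T) :
    zetaA (applyProdA p j m u) = applyProdA (zetaP p) j m (zetaA u) := by
  simp [zetaA, applyProdA, zetaP, List.map_take, List.map_drop, Function.comp_def]

lemma dfOK_zetaA {u : AWord (NI N) T} {j : ℕ} (h : dfOK u j) : dfOK (zetaA u) j := by
  intro i x o hi s oj hj
  simp only [zetaA, List.getElem?_map, Option.map_eq_some_iff, Prod.exists] at hi hj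
  obtain ⟨n | a, o, hui, hn⟩ := hi
  · obtain ⟨s', oj', huj, hs'⟩ := hj
    simp only [Prod.map, id, Prod.mk.injEq] at hn hs'
    rw [← hn.2, ← hs'.2]
    exact h i n o hui s' oj' huj
  · simp [zetaS] at hn

lemma zetaP_mem_prods {G : CFG N T} {ws : List (List T)} {p : CProd (NI N) T}
    (hp : p ∈ DeltaI G ws) : zetaP p ∈ G.prods := by
  obtain ⟨_, _, _, -, hc⟩ := hp
  rcases hc with ⟨_, hX, -, rfl⟩ | ⟨_, hX, rfl⟩ | ⟨_, _, _, hX, -, -, rfl⟩ |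
      ⟨_, _, _, hX, -, -, rfl⟩ | ⟨_, _, _, hX, -, -, rfl⟩ <;>
    simpa [zetaP, zetaS, tw, Function.comp_def] using hX

lemma DFSeq.zeta {G : CFG N T} {ws : List (List T)} {k : ℕ∞} {m : ℕ} {u va : AWord (NI N) T}
    {L : List (CProd (NI N) T × ℕ)} (h : DFSeq (GI G ws) k m u L va) :
    DFSeq G k m (zetaA u) (L.map (Prod.map zetaP id)) (zetaA va) := by
  induction h with
  | refl m u hc => exact DFSeq.refl m _ (by rwa [ntCountA_zetaA])
  | @step _ _ _ _ _ o _ hc hp hg hdf _ ih =>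
      refine DFSeq.step (o := o) (by rwa [ntCountA_zetaA]) (zetaP_mem_prods hp) ?_ (dfOK_zetaA hdf) ?_
      · simp [zetaA, hg, zetaP, zetaS]
      · rwa [← zetaA_applyProdA]

end Zeta

theorem product_soundness_general {N T : Type} (G : CFG N T)
    (ws : List (List T))
    (X : N) (q q' : QB)
    (w : List T) (k : ℕ) (γ : List (CProd (NI N) T))
    (h : DFCtrlFrom (GI G ws) (k : ℕ∞) [Sum.inl ((q, X, q') : NI N)] γ (tw w)) :
    DFCtrlFrom G (k : ℕ∞) [Sum.inl X] (zetaC γ) (tw w) ∧ DerB ws q w q' := by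
  obtain ⟨js, va, hlen, hseq, hva⟩ := h
  refine ⟨⟨js, zetaA va, by simpa [zetaC] using hlen, ?_, ?_⟩, ?_⟩
  · rw [zetaC, List.zip_map_left]
    exact hseq.zeta
  · rw [strip_zetaA, hva]
    simp [tw, zetaS, Function.comp_def]
  · have hspine : Spine ws q (strip va) q' := hseq.spine (Spine.consN (Spine.nil q'))
    rw [hva] at hspine
    exact derB_iff_rightRun.mpr hspine.rightRun_of_tw

/-- Lemma 6 (i): for `G` in 2NF and the product grammar `G^∩`,
a `k`-index depth-first derivation `[q X q'] ⇒^γ w` of `G^∩` yields a `k`-index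
depth-first derivation `X ⇒^{ζ(γ)} w` of `G` together with `q ⇒* w·q'` in `G^b`. -/
theorem product_soundness {N T : Type} (G : CFG N T) (h2NF : TwoNF G)
    (ws : List (List T)) (hb : IsBExpr ws)
    (X : N) (q q' : QB) (hq : ValidQ ws q) (hq' : ValidQ ws q')
    (w : List T) (k : ℕ) (hk : 0 < k) (γ : List (CProd (NI N) T))
    (h : DFCtrlFrom (GI G ws) (k : ℕ∞) [Sum.inl ((q, X, q') : NI N)] γ (tw w)) :
    DFCtrlFrom G (k : ℕ∞) [Sum.inl X] (zetaC γ) (tw w) ∧ DerB ws q w q' :=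
  product_soundness_general G ws X q q' w k γ h

end Paper
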